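/- In the shortest (optimal) route collecting n items on a circular carousel, the picker changes direction at most once under the open-loop strategy. -/

import Mathlib

/-!
Lift a route to the universal cover `ℝ` of the carousel. Its length is the length of the lifted
path, which starts at `0` and reaches the ends of some interval `[b, a] ∋ 0`, hence is at least
`min (2a - b) (a - 2b)`; and every item is the image of a point of `[b, a]`. The route that
sweeps `0 → a → b` (resp. `0 → b → a`) in the cover visits all those items, turns at most once,
and has length at most `2a - b` (resp. `a - 2b`).
-/

/-- Length of one leg of a route on the unit-circumference circle: from `p` to `x`,
clockwise (increasing coordinate) if `dir = true`, counterclockwise otherwise. -/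
noncomputable def legLen (p x : ℝ) (dir : Bool) : ℝ :=
  if dir then Int.fract (x - p) else Int.fract (p - x)

/-- Total length of a route, given as a list of (next point, direction) legs, starting
from `p`. -/
noncomputable def routeLen (p : ℝ) : List (ℝ × Bool) → ℝ
  | [] => 0
  | (x, dir) :: rest => legLen p x dir + routeLen x rest

/-- The number of changes of direction in a list of leg directions. -/
def countTurns : List Bool → ℕ
  | [] => 0
  | [_] => 0
  | a :: b :: rest => (if a ≠ b then 1 else 0) + countTurns (b :: rest)

open Set

theorem countTurns_eq_zero_of_forall_eq {c : Bool} :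
    ∀ l : List Bool, (∀ x ∈ l, x = c) → countTurns l = 0
  | [], _ | [_], _ => rfl
  | a :: b :: rest, h => by
    have hab : a = b := by rw [h a (by simp), h b (by simp)]
    simp only [countTurns, hab, ne_eq, not_true_eq_false, if_false, zero_add]
    exact countTurns_eq_zero_of_forall_eq (b :: rest) fun x hx => h x (by simp [hx])

theorem countTurns_le_one_of_pairwise_ge :
    ∀ l : List Bool, l.Pairwise (· ≥ ·) → countTurns l ≤ 1
  | [], _ | [_], _ => by simp [countTurns]
  | a :: b :: rest, h => by
    obtain ⟨hhead, htail⟩ := List.pairwise_cons.1 h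
    by_cases hab : a = b
    · simpa [countTurns, hab] using countTurns_le_one_of_pairwise_ge (b :: rest) htail
    · have hb : b = false := by
        have := hhead b (by simp); cases a <;> cases b <;> simp_all [Bool.le_iff_imp]
      have hrest : ∀ x ∈ b :: rest, x = false := fun x hx => by
        rcases List.mem_cons.1 hx with rfl | hx
        · exact hb
        · simpa [hb, Bool.le_iff_imp] using (List.pairwise_cons.1 htail).1 x hx
      simp [countTurns, hab, countTurns_eq_zero_of_forall_eq _ hrest]

theorem countTurns_map_not : ∀ l : List Bool, countTurns (l.map (!·)) = countTurns l
  | [] | [_] => rfl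
  | a :: b :: rest => by
    simp [countTurns, ← countTurns_map_not (b :: rest)]

theorem Int.fract_le_self_of_nonneg {R : Type*} [Ring R] [LinearOrder R] [IsStrictOrderedRing R]
    [FloorRing R] {x : R} (hx : 0 ≤ x) : Int.fract x ≤ x :=
  sub_le_self x (by exact_mod_cast Int.floor_nonneg.2 hx)

theorem legLen_fract (p x : ℝ) (dir : Bool) :
    legLen (Int.fract p) (Int.fract x) dir = legLen p x dir := by
  have key : ∀ s t : ℝ, Int.fract (Int.fract s - Int.fract t) = Int.fract (s - t) := fun s t =>
    Int.fract_eq_fract.2 ⟨⌊t⌋ - ⌊s⌋, by unfold Int.fract; push_cast; ring⟩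
  cases dir <;> simp only [legLen, key, Bool.false_eq_true, if_true, if_false]

theorem legLen_neg (p x : ℝ) (dir : Bool) : legLen (-p) (-x) (!dir) = legLen p x dir := by
  cases dir <;> simp only [legLen, Bool.not_false, Bool.not_true, Bool.false_eq_true, if_true,
    if_false, sub_neg_eq_add, neg_add_eq_sub]

theorem legLen_nonneg (p x : ℝ) (dir : Bool) : 0 ≤ legLen p x dir := by
  cases dir <;> exact Int.fract_nonneg _

theorem routeLen_map_fract (L : List (ℝ × Bool)) (p : ℝ) :
    routeLen (Int.fract p) (L.map (Prod.map Int.fract id)) = routeLen p L := by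
  induction L generalizing p with
  | nil => rfl
  | cons xd L ih => simp only [List.map_cons, routeLen, Prod.map, id, legLen_fract, ih]

theorem routeLen_congr_fract {p q : ℝ} {L L' : List (ℝ × Bool)} (hpq : Int.fract p = Int.fract q)
    (hL : L.map (Prod.map Int.fract id) = L'.map (Prod.map Int.fract id)) :
    routeLen p L = routeLen q L' := by
  rw [← routeLen_map_fract L, ← routeLen_map_fract L', hpq, hL]

theorem routeLen_map_neg (L : List (ℝ × Bool)) (p : ℝ) :
    routeLen (-p) (L.map fun xd => (-xd.1, !xd.2)) = routeLen p L := by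
  induction L generalizing p with
  | nil => rfl
  | cons xd L ih => simp only [List.map_cons, routeLen, legLen_neg, ih]

noncomputable def pathLength : List ℝ → ℝ
  | [] | [_] => 0
  | x :: y :: rest => |y - x| + pathLength (y :: rest)

theorem abs_sub_le_pathLength (x : ℝ) (l : List ℝ) {y : ℝ} (hy : y ∈ x :: l) :
    |y - x| ≤ pathLength (x :: l) := by
  induction l generalizing x y with
  | nil => simp_all [pathLength]
  | cons w l ih =>
    rcases List.mem_cons.1 hy with rfl | hy
    · have hw : 0 ≤ pathLength (w :: l) := by simpa using ih w (y := w) (by simp)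
      simpa [pathLength] using add_nonneg (abs_nonneg (w - y)) hw
    · calc |y - x| ≤ |w - x| + |y - w| := by simpa [add_comm] using abs_sub_le y w x
        _ ≤ |w - x| + pathLength (w :: l) := by linarith [ih w hy]
        _ = pathLength (x :: w :: l) := rfl

theorem min_le_pathLength (x : ℝ) (l : List ℝ) {y z : ℝ} (hy : y ∈ x :: l) (hz : z ∈ x :: l) :
    min (|y - x| + |z - y|) (|z - x| + |y - z|) ≤ pathLength (x :: l) := by
  induction l generalizing x with
  | nil => simp_all [pathLength]
  | cons w l ih =>
    rcases List.mem_cons.1 hy with rfl | hy'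
    · exact min_le_of_left_le (by simpa using abs_sub_le_pathLength y _ hz)
    rcases List.mem_cons.1 hz with rfl | hz'
    · exact min_le_of_right_le (by simpa using abs_sub_le_pathLength z _ hy)
    have hyx : |y - x| ≤ |w - x| + |y - w| := by simpa [add_comm] using abs_sub_le y w x
    have hzx : |z - x| ≤ |w - x| + |z - w| := by simpa [add_comm] using abs_sub_le z w x
    have := ih w hy' hz'
    rw [pathLength]
    rcases min_cases (|y - w| + |z - y|) (|z - w| + |y - z|) with ⟨h, -⟩ | ⟨h, -⟩ <;>
      rw [h] at this
    · exact min_le_of_left_le (by linarith)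
    · exact min_le_of_right_le (by linarith)

/-- The point of `ℝ` (the universal cover of the carousel) reached from `p` by the leg to `x`. -/
noncomputable def liftStep (p x : ℝ) (dir : Bool) : ℝ :=
  if dir then p + legLen p x dir else p - legLen p x dir

noncomputable def liftRoute (p : ℝ) : List (ℝ × Bool) → List ℝ
  | [] => []
  | (x, dir) :: rest => liftStep p x dir :: liftRoute (liftStep p x dir) rest

theorem fract_liftStep (p x : ℝ) (dir : Bool) : Int.fract (liftStep p x dir) = Int.fract x := by
  refine Int.fract_eq_fract.2 ?_
  cases dir
  · refine ⟨⌊p - x⌋, ?_⟩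
    simp only [liftStep, legLen, Bool.false_eq_true, if_false]; unfold Int.fract; ring
  · refine ⟨-⌊x - p⌋, ?_⟩
    simp only [liftStep, legLen, if_true]; unfold Int.fract; push_cast; ring

theorem abs_liftStep_sub (p x : ℝ) (dir : Bool) : |liftStep p x dir - p| = legLen p x dir := by
  cases dir <;> simp [liftStep, abs_of_nonneg (legLen_nonneg ..)]

theorem routeLen_eq_pathLength_liftRoute (L : List (ℝ × Bool)) (p : ℝ) :
    routeLen p L = pathLength (p :: liftRoute p L) := by
  induction L generalizing p with
  | nil => rfl
  | cons xd L ih =>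
    obtain ⟨x, dir⟩ := xd
    rw [routeLen, liftRoute, pathLength, abs_liftStep_sub, ← ih,
      routeLen_congr_fract (fract_liftStep p x dir) rfl]

theorem exists_mem_liftRoute_fract_eq (L : List (ℝ × Bool)) (p : ℝ) :
    ∀ xd ∈ L, ∃ y ∈ liftRoute p L, Int.fract y = Int.fract xd.1 := by
  induction L generalizing p with
  | nil => simp
  | cons xd L ih =>
    obtain ⟨x, dir⟩ := xd
    rintro _ (_ | ⟨_, hmem⟩)
    · exact ⟨_, List.mem_cons_self, fract_liftStep p x dir⟩
    · obtain ⟨y, hy, hfract⟩ := ih _ _ hmem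
      exact ⟨y, List.mem_cons_of_mem _ hy, hfract⟩

theorem exists_window_le_routeLen (L : List (ℝ × Bool)) :
    ∃ a b : ℝ, b ≤ 0 ∧ 0 ≤ a ∧ (∀ xd ∈ L, ∃ y ∈ Icc b a, Int.fract y = Int.fract xd.1) ∧
      min (2 * a - b) (a - 2 * b) ≤ routeLen 0 L := by
  set S := (0 :: liftRoute 0 L).toFinset
  have hS : S.Nonempty := ⟨0, by simp [S]⟩
  have h0 : (0 : ℝ) ∈ S := by simp [S]
  have hb0 := S.min'_le 0 h0
  have ha0 := S.le_max' 0 h0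
  refine ⟨S.max' hS, S.min' hS, hb0, ha0, fun xd hxd => ?_, ?_⟩
  · obtain ⟨y, hy, hfract⟩ := exists_mem_liftRoute_fract_eq L 0 xd hxd
    have hyS : y ∈ S := by simp [S, hy]
    exact ⟨y, ⟨S.min'_le y hyS, S.le_max' y hyS⟩, hfract⟩
  · have := min_le_pathLength 0 (liftRoute 0 L) (List.mem_toFinset.1 (S.max'_mem hS))
      (List.mem_toFinset.1 (S.min'_mem hS))
    rw [routeLen_eq_pathLength_liftRoute]
    convert this using 2 <;>
      simp only [sub_zero, abs_of_nonneg ha0, abs_of_nonpos hb0,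
        abs_of_nonpos (sub_nonpos.2 (hb0.trans ha0)),
        abs_of_nonneg (sub_nonneg.2 (hb0.trans ha0))] <;>
      ring

/-- Time at which the sweep `0 → a → b` of `ℝ`, at unit speed, passes `y ∈ [b, a]`. -/
noncomputable def sweepTime (a y : ℝ) : ℝ := if 0 ≤ y then y else 2 * a - y

noncomputable def sweepLeg (y : ℝ) : ℝ × Bool := (y, decide (0 ≤ y))

theorem sweepTime_le {a b y : ℝ} (hy : y ∈ Icc b a) : sweepTime a y ≤ 2 * a - b := by
  unfold sweepTime; split_ifs <;> linarith [hy.1, hy.2]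

theorem sweepTime_nonneg {a y : ℝ} (ha : 0 ≤ a) : 0 ≤ sweepTime a y := by
  unfold sweepTime; split_ifs <;> linarith

theorem nonneg_of_sweepTime_le {a y : ℝ} (ha : 0 ≤ a) (h : sweepTime a y ≤ a) : 0 ≤ y := by
  unfold sweepTime at h; split_ifs at h with hy <;> linarith

theorem legLen_sweepLeg_le {a p y : ℝ} (hp : p ≤ a) (hy : y ≤ a)
    (h : sweepTime a p ≤ sweepTime a y) :
    legLen p y (decide (0 ≤ y)) ≤ sweepTime a y - sweepTime a p := by
  unfold sweepTime at h ⊢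
  by_cases hy0 : 0 ≤ y <;> by_cases hp0 : 0 ≤ p <;>
    simp only [legLen, hy0, hp0, decide_true, decide_false, if_true, if_false,
      Bool.false_eq_true] at h ⊢
  · exact Int.fract_le_self_of_nonneg (by linarith)
  · linarith
  · linarith [Int.fract_le_self_of_nonneg (show 0 ≤ p - y by linarith)]
  · linarith [Int.fract_le_self_of_nonneg (show 0 ≤ p - y by linarith)]

theorem routeLen_map_sweepLeg_le {a b : ℝ} (ys : List ℝ) (p : ℝ)
    (hsorted : (p :: ys).Pairwise (sweepTime a · ≤ sweepTime a ·))
    (hmem : ∀ y ∈ p :: ys, y ∈ Icc b a) :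
    routeLen p (ys.map sweepLeg) ≤ 2 * a - b - sweepTime a p := by
  induction ys generalizing p with
  | nil => simpa [routeLen] using sweepTime_le (hmem p (by simp))
  | cons y ys ih =>
    obtain ⟨hhead, htail⟩ := List.pairwise_cons.1 hsorted
    have hleg := legLen_sweepLeg_le (hmem p (by simp)).2 (hmem y (by simp)).2 (hhead y (by simp))
    have hrest := ih y htail fun z hz => hmem z (List.mem_cons_of_mem _ hz)
    simp only [List.map_cons, sweepLeg, routeLen]
    linarith

theorem exists_sweep_route_le {n : ℕ} {a b : ℝ} (v : Fin n → ℝ) (hv : ∀ i, v i ∈ Icc b a)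
    (hb : b ≤ 0) (ha : 0 ≤ a) :
    ∃ (σ : Equiv.Perm (Fin n)) (d : Fin n → Bool), countTurns (List.ofFn d) ≤ 1 ∧
      routeLen 0 (List.ofFn fun k => (v (σ k), d k)) ≤ 2 * a - b := by
  set σ := Tuple.sort (fun i => sweepTime a (v i))
  have hmono : Monotone fun k => sweepTime a (v (σ k)) :=
    Tuple.monotone_sort fun i => sweepTime a (v i)
  refine ⟨σ, fun k => decide (0 ≤ v (σ k)), ?_, ?_⟩
  · refine countTurns_le_one_of_pairwise_ge _ (List.pairwise_ofFn.2 fun k l hkl => ?_)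
    simp only [ge_iff_le, Bool.le_iff_imp, decide_eq_true_eq]
    intro hl
    refine nonneg_of_sweepTime_le ha ((hmono hkl.le).trans ?_)
    simpa [sweepTime, hl] using (hv (σ l)).2
  · have hsorted :
        (0 :: List.ofFn fun k => v (σ k)).Pairwise (sweepTime a · ≤ sweepTime a ·) := by
      refine List.pairwise_cons.2 ⟨fun y _ => ?_, List.pairwise_ofFn.2 fun k l hkl => hmono hkl.le⟩
      simpa [sweepTime] using sweepTime_nonneg ha
    have hmem : ∀ y ∈ 0 :: List.ofFn fun k => v (σ k), y ∈ Icc b a := by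
      simp only [List.mem_cons, List.mem_ofFn]
      rintro y (rfl | ⟨k, rfl⟩)
      exacts [⟨hb, ha⟩, hv (σ k)]
    simpa [sweepTime, List.map_ofFn, sweepLeg, Function.comp_def] using
      routeLen_map_sweepLeg_le _ 0 hsorted hmem

theorem exists_oneTurn_route_le {n : ℕ} {a b : ℝ} (v : Fin n → ℝ) (hv : ∀ i, v i ∈ Icc b a)
    (hb : b ≤ 0) (ha : 0 ≤ a) :
    ∃ (σ : Equiv.Perm (Fin n)) (d : Fin n → Bool), countTurns (List.ofFn d) ≤ 1 ∧
      routeLen 0 (List.ofFn fun k => (v (σ k), d k)) ≤ min (2 * a - b) (a - 2 * b) := by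
  rcases le_total (2 * a - b) (a - 2 * b) with h | h
  · rw [min_eq_left h]
    exact exists_sweep_route_le v hv hb ha
  · rw [min_eq_right h]
    -- mirror the sweep `0 → -b → -a` of `-v`
    obtain ⟨σ, d, hturns, hlen⟩ := exists_sweep_route_le (fun i => -v i)
      (fun i => ⟨neg_le_neg (hv i).2, neg_le_neg (hv i).1⟩) (neg_nonpos.2 ha) (neg_nonneg.2 hb)
    refine ⟨σ, fun k => !d k, ?_, ?_⟩
    · simpa only [List.map_ofFn, Function.comp_def] using
        (countTurns_map_not (List.ofFn d)).trans_le hturns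
    · rw [← routeLen_map_neg, neg_zero, List.map_ofFn] at hlen
      simpa [Function.comp_def] using hlen.trans_eq (by ring)

theorem routeLen_ofFn_congr_fract {n : ℕ} {u v : Fin n → ℝ}
    (huv : ∀ i, Int.fract (u i) = Int.fract (v i)) (σ : Equiv.Perm (Fin n)) (d : Fin n → Bool)
    (p : ℝ) :
    routeLen p (List.ofFn fun k => (u (σ k), d k)) =
      routeLen p (List.ofFn fun k => (v (σ k), d k)) :=
  routeLen_congr_fract rfl (by simp [List.map_ofFn, Function.comp_def, huv])

theorem optimal_route_at_most_one_turn_general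
    (n : ℕ) (u : Fin n → ℝ) :
    ∀ (σ : Equiv.Perm (Fin n)) (d : Fin n → Bool),
      ∃ (σ' : Equiv.Perm (Fin n)) (d' : Fin n → Bool),
        countTurns (List.ofFn d') ≤ 1 ∧
        routeLen 0 (List.ofFn (fun k => (u (σ' k), d' k))) ≤
          routeLen 0 (List.ofFn (fun k => (u (σ k), d k))) := by
  intro σ d
  obtain ⟨a, b, hb, ha, hcover, hlower⟩ :=
    exists_window_le_routeLen (List.ofFn fun k => (u (σ k), d k))
  have hcover' : ∀ i, ∃ y ∈ Icc b a, Int.fract y = Int.fract (u i) := fun i =>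
    hcover (u i, d (σ.symm i)) (List.mem_ofFn.2 ⟨σ.symm i, by simp⟩)
  choose v hv hvu using hcover'
  obtain ⟨σ', d', hturns, hupper⟩ := exists_oneTurn_route_le v hv hb ha
  refine ⟨σ', d', hturns, ?_⟩
  rw [routeLen_ofFn_congr_fract (fun i => (hvu i).symm)]
  exact hupper.trans hlower

/-- On a circular carousel (circumference 1, picker starting at `0`, items at distinct
positions `u i ∈ [0,1)`), for every route visiting all items (a visiting order `σ` together
with a direction choice for each leg) there is a route changing direction at most once that
is at least as short. Hence the shortest (open-loop) route changes direction at most once,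
and the optimal travel time is the minimum over the routes with at most one turn. -/
theorem optimal_route_at_most_one_turn
    (n : ℕ) (u : Fin n → ℝ) (hu : Function.Injective u)
    (hmem : ∀ i, u i ∈ Set.Ico (0 : ℝ) 1) (hne : ∀ i, u i ≠ 0) :
    ∀ (σ : Equiv.Perm (Fin n)) (d : Fin n → Bool),
      ∃ (σ' : Equiv.Perm (Fin n)) (d' : Fin n → Bool),
        countTurns (List.ofFn d') ≤ 1 ∧
        routeLen 0 (List.ofFn (fun k => (u (σ' k), d' k))) ≤
          routeLen 0 (List.ofFn (fun k => (u (σ k), d k))) :=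
  optimal_route_at_most_one_turn_general n u
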